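/- Let F ∈ ℝ^{n×n} be skew-symmetric with singular values μ₁ ≥ μ₂ ≥ … (each nonzero μ appearing with even multiplicity), and let P_r ∈ ℝ^{r×n} with P_r P_rᵀ = I_r. Then ‖P_r F P_rᵀ‖_F² ≤ 2 · Σ_{k=1}^{⌊r/2⌋} μ_{2k-1}², i.e., the squared Frobenius norm of the compression is bounded by twice the sum of the squares of the ⌊r/2⌋ largest distinct skew-eigenvalue magnitudes. -/
import Mathlib


open Matrix


lemma L3 (c : ℕ → ℝ) (hc : Antitone c) (h : ℕ) :
    ∑ i ∈ Finset.range (2 * h), c i ≤ 2 * ∑ k ∈ Finset.range h, c (2 * k) := by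
  induction h with
  | zero => simp
  | succ h ih =>
    have e : 2 * (h + 1) = (2 * h) + 1 + 1 := by ring
    rw [e, Finset.sum_range_succ, Finset.sum_range_succ, Finset.sum_range_succ]
    have := hc (Nat.le_succ (2 * h))
    linarith

lemma L2 {n : ℕ} (c : ℕ → ℝ) (hc : Antitone c) (hc0 : ∀ i, 0 ≤ c i)
    (s : Fin n → ℝ) (hs0 : ∀ i, 0 ≤ s i) (hs1 : ∀ i, s i ≤ 1) (m : ℕ)
    (hsum : ∑ i, s i ≤ (m : ℝ)) :
    ∑ i : Fin n, c i * s i ≤ ∑ k ∈ Finset.range m, c k := by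
  have h1 : ∑ i : Fin n, (c i - c m) * s i ≤ ∑ k ∈ Finset.range m, (c k - c m) := by
    calc ∑ i : Fin n, (c i - c m) * s i
        ≤ ∑ i : Fin n, (if (i : ℕ) < m then c (i : ℕ) - c m else 0) := by
          apply Finset.sum_le_sum; intro i _
          by_cases h : (i : ℕ) < m
          · simp only [h, if_true]
            have h2 : 0 ≤ c (i : ℕ) - c m := sub_nonneg.2 (hc (le_of_lt h))
            nlinarith [hs1 i, hs0 i]
          · simp only [h, if_false]
            have h2 : c (i : ℕ) - c m ≤ 0 := sub_nonpos.2 (hc (not_lt.1 h))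
            exact mul_nonpos_of_nonpos_of_nonneg h2 (hs0 i)
      _ = ∑ i ∈ (Finset.range n).filter (· < m), (c i - c m) := by
          rw [Fin.sum_univ_eq_sum_range (fun i => if i < m then c i - c m else 0) n,
            Finset.sum_filter]
      _ ≤ ∑ k ∈ Finset.range m, (c k - c m) := by
          apply Finset.sum_le_sum_of_subset_of_nonneg
          · intro x hx; simp only [Finset.mem_filter, Finset.mem_range] at hx ⊢; exact hx.2
          · intro k hk _; exact sub_nonneg.2 (hc (le_of_lt (Finset.mem_range.1 hk)))
  have e1 : ∑ i : Fin n, (c i - c m) * s i = ∑ i : Fin n, c i * s i - c m * ∑ i, s i := by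
    rw [Finset.mul_sum, ← Finset.sum_sub_distrib]; apply Finset.sum_congr rfl; intro i _; ring
  have e2 : ∑ k ∈ Finset.range m, (c k - c m) = ∑ k ∈ Finset.range m, c k - m * c m := by
    rw [Finset.sum_sub_distrib, Finset.sum_const, Finset.card_range, nsmul_eq_mul]
  have h3 : c m * ∑ i, s i ≤ c m * m := mul_le_mul_of_nonneg_left hsum (hc0 m)
  rw [e1] at h1; rw [e2] at h1; linarith

lemma trace_mul_transpose_nonneg {n m : ℕ} (C : Matrix (Fin n) (Fin m) ℝ) :
    0 ≤ (C * Cᵀ).trace := by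
  simp only [Matrix.trace, Matrix.diag, Matrix.mul_apply, Matrix.transpose_apply]
  apply Finset.sum_nonneg; intro i _
  apply Finset.sum_nonneg; intro j _
  exact mul_self_nonneg _

lemma key {n : ℕ} (F : Matrix (Fin n) (Fin n) ℝ) (hF : Fᵀ = -F)
    (μ : ℕ → ℝ) (hμanti : Antitone μ) (hμnonneg : ∀ k, 0 ≤ μ k)
    (Q : Matrix (Fin n) (Fin n) ℝ) (hQ : Qᵀ * Q = 1)
    (hdiag : Fᵀ * F = Q * Matrix.diagonal (fun i : Fin n => (μ (i : ℕ)) ^ 2) * Qᵀ)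
    (T : Matrix (Fin n) (Fin n) ℝ) (hTsym : Tᵀ = T) (hTidem : T * T = T)
    (m : ℕ) (htr : T.trace ≤ (m : ℝ)) :
    (F * T * Fᵀ * T).trace ≤ ∑ k ∈ Finset.range m, μ k ^ 2 := by
  have hQQ : Q * Qᵀ = 1 := mul_eq_one_comm.mp hQ
  set G := Qᵀ * T * Q with hG
  have hGsym : Gᵀ = G := by
    rw [hG, Matrix.transpose_mul, Matrix.transpose_mul, Matrix.transpose_transpose, hTsym,
      Matrix.mul_assoc]
  have hGG : G * G = G := by
    have : G * G = Qᵀ * T * (Q * Qᵀ) * T * Q := by rw [hG]; noncomm_ring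
    rw [this, hQQ, mul_one, Matrix.mul_assoc Qᵀ T T, hTidem]
  have hGdiag : ∀ i, G i i = ∑ j, (G i j) ^ 2 := by
    intro i
    conv_lhs => rw [← hGG]
    rw [Matrix.mul_apply]
    apply Finset.sum_congr rfl; intro j _
    have hji : G j i = G i j := by
      conv_lhs => rw [show G j i = Gᵀ i j from rfl, hGsym]
    rw [hji]; ring
  have hs0 : ∀ i, 0 ≤ G i i := by
    intro i; rw [hGdiag i]
    exact Finset.sum_nonneg fun j _ => sq_nonneg _
  have hs1 : ∀ i, G i i ≤ 1 := by
    intro i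
    have h := hGdiag i
    have h2 : (G i i) ^ 2 ≤ ∑ j, (G i j) ^ 2 :=
      Finset.single_le_sum (f := fun j => (G i j) ^ 2) (fun j _ => sq_nonneg _)
        (Finset.mem_univ i)
    nlinarith [hs0 i]
  have hsumG : ∑ i, G i i = T.trace := by
    have h1 : (∑ i, G i i) = G.trace := by simp [Matrix.trace, Matrix.diag]
    rw [h1, hG, Matrix.trace_mul_comm (Qᵀ * T) Q, ← Matrix.mul_assoc, hQQ, one_mul]
  -- step 1 : compression bound
  have h1T : (1 - T) * (1 - T) = 1 - T := by
    have : (1 - T) * (1 - T) = 1 - T - T + T * T := by noncomm_ring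
    rw [this, hTidem]; abel
  have h1Tsym : (1 - T)ᵀ = 1 - T := by rw [Matrix.transpose_sub, Matrix.transpose_one, hTsym]
  have e3 : (T * F * (1 - T)) * (T * F * (1 - T))ᵀ = T * (F * (1 - T) * Fᵀ) * T := by
    rw [Matrix.transpose_mul, Matrix.transpose_mul, h1Tsym, hTsym]
    calc T * F * (1 - T) * ((1 - T) * (Fᵀ * T))
        = T * (F * ((1 - T) * (1 - T)) * Fᵀ) * T := by noncomm_ring
      _ = T * (F * (1 - T) * Fᵀ) * T := by rw [h1T]
  have e4 : (T * (F * (1 - T) * Fᵀ) * T).trace = (F * (1 - T) * Fᵀ * T).trace := by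
    rw [Matrix.trace_mul_comm (T * (F * (1 - T) * Fᵀ)) T, ← Matrix.mul_assoc, hTidem,
      Matrix.trace_mul_comm]
  have e5 : F * (1 - T) * Fᵀ * T = F * Fᵀ * T - F * T * Fᵀ * T := by noncomm_ring
  have hC := trace_mul_transpose_nonneg (T * F * (1 - T))
  rw [e3] at hC
  rw [e4, e5, Matrix.trace_sub] at hC
  have hstep1 : (F * T * Fᵀ * T).trace ≤ (F * Fᵀ * T).trace := by linarith
  have hFF : F * Fᵀ = Fᵀ * F := by rw [hF]; noncomm_ring
  have hstep3 : (Fᵀ * F * T).trace = ∑ i : Fin n, μ (i : ℕ) ^ 2 * G i i := by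
    rw [hdiag]
    have : Q * Matrix.diagonal (fun i : Fin n => (μ (i : ℕ)) ^ 2) * Qᵀ * T =
        Q * (Matrix.diagonal (fun i : Fin n => (μ (i : ℕ)) ^ 2) * (Qᵀ * T)) := by
      noncomm_ring
    rw [this, Matrix.trace_mul_comm Q,
      Matrix.mul_assoc (Matrix.diagonal fun i : Fin n => (μ (i : ℕ)) ^ 2) (Qᵀ * T) Q, ← hG]
    simp [Matrix.trace, Matrix.diag, Matrix.diagonal_mul]
  have hc : Antitone (fun k => μ k ^ 2) := by
    intro a b h
    exact pow_le_pow_left₀ (hμnonneg b) (hμanti h) 2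
  have hfinal := L2 (fun k => μ k ^ 2) hc (fun k => sq_nonneg _) (fun i => G i i)
    hs0 hs1 m (by rw [hsumG]; exact htr)
  calc (F * T * Fᵀ * T).trace ≤ (F * Fᵀ * T).trace := hstep1
    _ = (Fᵀ * F * T).trace := by rw [hFF]
    _ = ∑ i : Fin n, μ (i : ℕ) ^ 2 * G i i := hstep3
    _ ≤ ∑ k ∈ Finset.range m, μ k ^ 2 := hfinal

/-- Signal-strength bound: the squared Frobenius norm of the row-orthonormal
compression of a skew-symmetric matrix `F` is bounded by twice the sum of the
squares of the `⌊r/2⌋` largest distinct skew-eigenvalue magnitudes.  The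
singular values of `F` are given by the antitone nonnegative sequence `μ`
(0-indexed, so the `k`-th largest distinct magnitude is `μ (2*k)`), encoded by
an orthogonal diagonalization of `Fᵀ * F`. -/
theorem skew_compression_signal_bound {r n : ℕ}
    (F : Matrix (Fin n) (Fin n) ℝ) (hF : Fᵀ = -F)
    (P : Matrix (Fin r) (Fin n) ℝ) (hP : P * Pᵀ = 1)
    (μ : ℕ → ℝ) (hμanti : Antitone μ) (hμnonneg : ∀ k, 0 ≤ μ k)
    (Q : Matrix (Fin n) (Fin n) ℝ) (hQ : Qᵀ * Q = 1)
    (hdiag : Fᵀ * F = Q * Matrix.diagonal (fun i : Fin n => (μ (i : ℕ)) ^ 2) * Qᵀ) :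
    ((P * F * Pᵀ)ᵀ * (P * F * Pᵀ)).trace ≤
      2 * ∑ k ∈ Finset.range (r / 2), (μ (2 * k)) ^ 2 := by
  have hc : Antitone (fun k => μ k ^ 2) := fun a b h =>
    pow_le_pow_left₀ (hμnonneg b) (hμanti h) 2
  set m := 2 * (r / 2) with hm
  have hF' : Fᵀᵀ = -Fᵀ := by rw [hF, Matrix.transpose_neg, hF]
  have hFtF : Fᵀᵀ * Fᵀ = Fᵀ * F := by rw [hF, Matrix.transpose_neg, hF]; noncomm_ring
  have hdiag' : Fᵀᵀ * Fᵀ = Q * Matrix.diagonal (fun i : Fin n => (μ (i : ℕ)) ^ 2) * Qᵀ := by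
    rw [hFtF, hdiag]
  suffices h : ((P * F * Pᵀ)ᵀ * (P * F * Pᵀ)).trace ≤ ∑ k ∈ Finset.range m, μ k ^ 2 by
    calc ((P * F * Pᵀ)ᵀ * (P * F * Pᵀ)).trace ≤ ∑ k ∈ Finset.range m, μ k ^ 2 := h
      _ ≤ 2 * ∑ k ∈ Finset.range (r / 2), (μ (2 * k)) ^ 2 := by
          have := L3 (fun k => μ k ^ 2) hc (r / 2)
          rw [hm]; exact this
  rcases Nat.even_or_odd r with he | ho
  · -- even case
    have hrm : m = r := Nat.mul_div_cancel' he.two_dvd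
    set T := Pᵀ * P with hT
    have hTsym : Tᵀ = T := by
      rw [hT, Matrix.transpose_mul, Matrix.transpose_transpose]
    have hTidem : T * T = T := by
      have h1 : T * T = Pᵀ * (P * Pᵀ) * P := by rw [hT]; simp only [Matrix.mul_assoc]
      rw [h1, hP, Matrix.mul_one]
    have htr : T.trace ≤ (m : ℝ) := by
      rw [hT, Matrix.trace_mul_comm Pᵀ P, hP, Matrix.trace_one, hrm]
      simp
    have heq : ((P * F * Pᵀ)ᵀ * (P * F * Pᵀ)).trace = (Fᵀ * T * Fᵀᵀ * T).trace := by
      have e1 : (P * F * Pᵀ)ᵀ * (P * F * Pᵀ) = P * (Fᵀ * (Pᵀ * P) * F * Pᵀ) := by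
        rw [Matrix.transpose_mul, Matrix.transpose_mul, Matrix.transpose_transpose]
        simp only [Matrix.mul_assoc]
      rw [e1, Matrix.trace_mul_comm P (Fᵀ * (Pᵀ * P) * F * Pᵀ)]
      have e2 : Fᵀ * (Pᵀ * P) * F * Pᵀ * P = Fᵀ * T * Fᵀᵀ * T := by
        rw [hT, Matrix.transpose_transpose]; simp only [Matrix.mul_assoc]
      rw [e2]
    rw [heq]
    exact key Fᵀ hF' μ hμanti hμnonneg Q hQ hdiag' T hTsym hTidem m htr
  · -- odd case
    have hr1 : 1 ≤ r := ho.pos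
    have hrm : m = r - 1 := by
      have h1 := Nat.div_add_mod r 2
      have h2 : r % 2 = 1 := Nat.odd_iff.mp ho
      omega
    set B := P * F * Pᵀ with hB
    have hBt : Bᵀ = P * Fᵀ * Pᵀ := by
      rw [hB, Matrix.transpose_mul, Matrix.transpose_mul, Matrix.transpose_transpose,
        ← Matrix.mul_assoc]
    have hBskew : Bᵀ = -B := by
      rw [hBt, hB, hF, Matrix.mul_neg, Matrix.neg_mul]
    have hdet : B.det = 0 := by
      have h1 : Bᵀ.det = B.det := Matrix.det_transpose B
      rw [hBskew, Matrix.det_neg] at h1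
      have h2 : ((-1 : ℝ)) ^ (Fintype.card (Fin r)) = -1 := by
        rw [Fintype.card_fin]; exact Odd.neg_one_pow ho
      rw [h2] at h1; linarith
    obtain ⟨v, hv0, hvB⟩ := Matrix.exists_mulVec_eq_zero_iff.mpr hdet
    set a := v ⬝ᵥ v with ha
    have ha0 : 0 < a := by
      have hnn : 0 ≤ a := by
        rw [ha]; exact Finset.sum_nonneg fun i _ => mul_self_nonneg (v i)
      rcases lt_or_eq_of_le hnn with h | h
      · exact h
      · exact absurd (dotProduct_self_eq_zero.mp h.symm) hv0
    set J := (1 : Matrix (Fin r) (Fin r) ℝ) - a⁻¹ • vecMulVec v v with hJ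
    have hvv : vecMulVec v v * vecMulVec v v = a • vecMulVec v v := by
      ext i j
      simp only [Matrix.mul_apply, Matrix.vecMulVec_apply, Matrix.smul_apply, smul_eq_mul,
        ha, dotProduct, Finset.sum_mul]
      apply Finset.sum_congr rfl; intro k _; ring
    have hJsym : Jᵀ = J := by
      rw [hJ, Matrix.transpose_sub, Matrix.transpose_one, Matrix.transpose_smul]
      congr 1
      ext i j
      simp [Matrix.vecMulVec_apply, mul_comm]
    have hJ2 : J * J = J := by
      rw [hJ]
      simp only [sub_mul, mul_sub, Matrix.one_mul, Matrix.mul_one, Matrix.smul_mul,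
        Matrix.mul_smul, hvv, smul_smul]
      rw [show a⁻¹ * (a⁻¹ * a) = a⁻¹ by field_simp]
      abel
    have hJtrace : J.trace = (r : ℝ) - 1 := by
      rw [hJ, Matrix.trace_sub, Matrix.trace_smul, Matrix.trace_one]
      have h1 : (vecMulVec v v).trace = a := by
        simp [Matrix.trace, Matrix.diag, Matrix.vecMulVec_apply, ha, dotProduct]
      rw [h1, smul_eq_mul, inv_mul_cancel₀ ha0.ne']
      simp
    have hBvv : B * vecMulVec v v = 0 := by
      ext i j
      simp only [Matrix.mul_apply, Matrix.vecMulVec_apply, Matrix.zero_apply]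
      have h1 : ∑ k, B i k * (v k * v j) = (∑ k, B i k * v k) * v j := by
        rw [Finset.sum_mul]; apply Finset.sum_congr rfl; intro k _; ring
      rw [h1]
      have h2 : (∑ k, B i k * v k) = (B *ᵥ v) i := rfl
      rw [h2, hvB]
      simp
    have hBJ : B * J = B := by
      rw [hJ, mul_sub, mul_one, Matrix.mul_smul, hBvv, smul_zero, sub_zero]
    have hJB : J * B = B := by
      have h1 := congrArg Matrix.transpose hBJ
      rw [Matrix.transpose_mul, hJsym, hBskew] at h1
      have h2 : J * -B = -(J * B) := by noncomm_ring
      rw [h2] at h1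
      exact neg_injective h1
    set T := Pᵀ * J * P with hT
    have hTsym : Tᵀ = T := by
      rw [hT, Matrix.transpose_mul, Matrix.transpose_mul, Matrix.transpose_transpose, hJsym,
        ← Matrix.mul_assoc]
    have hTidem : T * T = T := by
      have h1 : T * T = Pᵀ * J * (P * Pᵀ) * J * P := by rw [hT]; simp only [Matrix.mul_assoc]
      rw [h1, hP, Matrix.mul_one, Matrix.mul_assoc Pᵀ J J, hJ2]
    have htr : T.trace ≤ (m : ℝ) := by
      rw [hT, Matrix.trace_mul_comm (Pᵀ * J) P, ← Matrix.mul_assoc, hP, one_mul, hJtrace, hrm]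
      rw [Nat.cast_sub hr1]
      simp
    have heq : (Bᵀ * B).trace = (Fᵀ * T * Fᵀᵀ * T).trace := by
      have e0 : Bᵀ * B = Bᵀ * (J * (B * J)) := by rw [hBJ, hJB]
      rw [e0, hBt, hB]
      have e1 : P * Fᵀ * Pᵀ * (J * (P * F * Pᵀ * J)) =
          P * (Fᵀ * (Pᵀ * J * P) * F * (Pᵀ * J)) := by simp only [Matrix.mul_assoc]
      rw [e1, Matrix.trace_mul_comm P]
      have e2 : Fᵀ * (Pᵀ * J * P) * F * (Pᵀ * J) * P = Fᵀ * T * Fᵀᵀ * T := by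
        rw [hT, Matrix.transpose_transpose]; simp only [Matrix.mul_assoc]
      rw [e2]
    rw [heq]
    exact key Fᵀ hF' μ hμanti hμnonneg Q hQ hdiag' T hTsym hTidem m htr
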